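/- For every 1-factor α of length n, the vector Ω(α) ∈ V^{⊗n} satisfies E Ω(α) = 0. If moreover [n]! ≠ 0 in k, then ⟨Ω(α), Ω(α)⟩ ≠ 0 for every 1-factor α of length n, ⟨Ω(α), Ω(β)⟩ = 0 for all distinct 1-factors α ≠ β of length n, and consequently the vectors Ω(α), as α ranges over the 1-factors of length n, are linearly independent over k. -/

import Mathlib

noncomputable section
attribute [local instance] Classical.propDecidable

/-- Balanced quantum integer `[m]` for a natural number `m`. -/
def qintN {k : Type*} [Field k] (v : k) (m : ℕ) : k :=
  ∑ t ∈ Finset.range m, v ^ ((m : ℤ) - 1 - 2 * t)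

/-- Balanced quantum integer `[m]` for an integer `m`. -/
def qint {k : Type*} [Field k] (v : k) (m : ℤ) : k :=
  if 0 ≤ m then qintN v m.toNat else - qintN v (-m).toNat

/-- Quantum factorial `[m]! = [1][2]⋯[m]`. -/
def qfact {k : Type*} [Field k] (v : k) (m : ℕ) : k :=
  ∏ j ∈ Finset.range m, qintN v (j + 1)

/-- The `n`-th tensor power of `V = k²`, realized as coordinate functions with
respect to the basis `y_i`, `i ∈ {1,-1}ⁿ` (here `true ↔ 1`, `false ↔ -1`). -/
abbrev Tn (k : Type*) [Field k] (n : ℕ) := (Fin n → Bool) → k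

/-- The sign of an index entry: `true ↦ 1`, `false ↦ -1`. -/
def sgn (b : Bool) : ℤ := if b then 1 else -1

/-- The weight `i₁ + ⋯ + i_n` of a basis index. -/
def wt {n : ℕ} (i : Fin n → Bool) : ℤ := ∑ t, sgn (i t)

variable {k : Type*} [Field k]

/-- The operator `E` on `V^{⊗n}`. -/
def Eop (v : k) (n : ℕ) : Tn k n →ₗ[k] Tn k n where
  toFun f := fun i =>
    ∑ j ∈ Finset.univ.filter (fun j => i j = true),
      v ^ (∑ t ∈ Finset.univ.filter (fun t => t < j), sgn (i t)) * f (Function.update i j false)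
  map_add' f g := by
    funext i
    simp [Pi.add_apply, mul_add, Finset.sum_add_distrib]
  map_smul' c f := by
    funext i
    simp only [Pi.smul_apply, smul_eq_mul, RingHom.id_apply]
    rw [Finset.mul_sum]
    exact Finset.sum_congr rfl fun j _ => by ring

/-- The operator `F` on `V^{⊗n}`. -/
def Fop (v : k) (n : ℕ) : Tn k n →ₗ[k] Tn k n where
  toFun f := fun i =>
    ∑ j ∈ Finset.univ.filter (fun j => i j = false),
      v ^ (-(∑ t ∈ Finset.univ.filter (fun t => j < t), sgn (i t))) * f (Function.update i j true)
  map_add' f g := by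
    funext i
    simp [Pi.add_apply, mul_add, Finset.sum_add_distrib]
  map_smul' c f := by
    funext i
    simp only [Pi.smul_apply, smul_eq_mul, RingHom.id_apply]
    rw [Finset.mul_sum]
    exact Finset.sum_congr rfl fun j _ => by ring

/-- The operator `K` on `V^{⊗n}`. -/
def Kop (v : k) (n : ℕ) : Tn k n →ₗ[k] Tn k n where
  toFun f := fun i => v ^ (wt i) * f i
  map_add' f g := by
    funext i
    simp [Pi.add_apply, mul_add]
  map_smul' c f := by
    funext i
    simp only [Pi.smul_apply, smul_eq_mul, RingHom.id_apply]
    ring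

/-- The symmetric bilinear form on `V^{⊗n}` making the `y_i` orthonormal. -/
def form {n : ℕ} (f g : Tn k n) : k := ∑ i, f i * g i

/-- Tensoring on the right with the basis vector `y₁` (if `b = true`) or `y₋₁`
(if `b = false`). -/
def tensY {n : ℕ} (b : Bool) (f : Tn k n) : Tn k (n + 1) :=
  fun i => if i (Fin.last n) = b then f (fun t => i t.castSucc) else 0

/-- `Φ₁(b) = b ⊗ y₁`. -/
def Phi1 {n : ℕ} (f : Tn k n) : Tn k (n + 1) := tensY true f

/-- `Φ₂(b) = [w] b ⊗ y₋₁ − v^w (F b) ⊗ y₁`, where `w` is the weight of `b`. -/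
def Phi2 (v : k) {n : ℕ} (w : ℤ) (f : Tn k n) : Tn k (n + 1) :=
  qint v w • tensY false f - v ^ w • tensY true (Fop v n f)

/-- A `1`-factor: all partial sums are nonnegative. -/
def IsOneFactor {n : ℕ} (α : Fin n → Bool) : Prop :=
  ∀ j : Fin n, 0 ≤ ∑ t ∈ Finset.univ.filter (fun t => t ≤ j), sgn (α t)

/-- The orthogonal maximal vectors `Ω(α)`, defined recursively. -/
def Omega (v : k) : (n : ℕ) → (Fin n → Bool) → Tn k n
  | 0, _ => fun _ => 1
  | n + 1, α =>
      if α (Fin.last n) = true then Phi1 (Omega v n fun t => α t.castSucc)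
      else Phi2 v (wt fun t => α t.castSucc) (Omega v n fun t => α t.castSucc)

/-- Exchanging the entries of an index at two positions. -/
def swapPair {n : ℕ} (a b : Fin n) (i : Fin n → Bool) : Fin n → Bool :=
  fun t => if t = a then i b else if t = b then i a else i t

/-- The Temperley--Lieb operator `ė` acting on tensor positions `a` and `b`
(intended: `b = a + 1`). -/
def eop (v : k) {n : ℕ} (a b : Fin n) : Tn k n →ₗ[k] Tn k n where
  toFun f := fun i =>
    if i a = true ∧ i b = false then -v⁻¹ * f i + f (swapPair a b i)
    else if i a = false ∧ i b = true then f (swapPair a b i) - v * f i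
    else 0
  map_add' f g := by
    funext i
    simp only [Pi.add_apply]
    split_ifs <;> ring
  map_smul' c f := by
    funext i
    simp only [Pi.smul_apply, smul_eq_mul, RingHom.id_apply]
    split_ifs <;> ring

/-- The partial sum `α₁ + ⋯ + α_{q-1}` of the entries before position `q`. -/
def prefSum {n : ℕ} (α : Fin n → Bool) (q : Fin n) : ℤ :=
  ∑ t ∈ Finset.univ.filter (fun t => t < q), sgn (α t)

/-- `(i, j)` is a pair of `α`: `α_i = 1` and `j` is the least index `> i` with
`α_i + ⋯ + α_j = 0`. -/
def PairedAt {n : ℕ} (α : Fin n → Bool) (i j : Fin n) : Prop :=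
  α i = true ∧ i < j ∧ (∑ t ∈ Finset.Icc i j, sgn (α t)) = 0 ∧
    ∀ j' : Fin n, i < j' → j' < j → (∑ t ∈ Finset.Icc i j', sgn (α t)) ≠ 0

/-- An index is a defect if it belongs to no pair. -/
def IsDefect {n : ℕ} (α : Fin n → Bool) (i : Fin n) : Prop :=
  (∀ j, ¬ PairedAt α i j) ∧ (∀ j, ¬ PairedAt α j i)

/-- `γ ∈ S(α)`: `γ` is obtained from `α` by negating both entries of each pair
in some subset of the pairs of `α`. -/
def InS {n : ℕ} (α γ : Fin n → Bool) : Prop :=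
  (∀ i, IsDefect α i → γ i = α i) ∧
  (∀ i j, PairedAt α i j → (γ i = α i ∧ γ j = α j) ∨ (γ i = !α i ∧ γ j = !α j))

/-- `σ(α, γ)`: the number of pairs of `α` negated to obtain `γ`. -/
def sigmaCount {n : ℕ} (α γ : Fin n → Bool) : ℕ :=
  Nat.card {p : Fin n × Fin n // PairedAt α p.1 p.2 ∧ γ p.1 ≠ α p.1}

/-- The natural (cellular) vectors `N(α) = Σ_{γ ∈ S(α)} (−v)^{σ(α,γ)} y_γ`,
written in coordinates. -/
def Nvec (v : k) (n : ℕ) (α : Fin n → Bool) : Tn k n :=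
  fun γ => if InS α γ then (-v) ^ (sigmaCount α γ) else 0

/-- `β^{(j)}` (0-indexed `j`): change the entry of `β` at the position of its
`(j+1)`-st defect (0-indexed: defect number `j`) to `−1`. -/
def linkDefect {m : ℕ} (β : Fin m → Bool) (j : ℕ) : Fin m → Bool :=
  match (Finset.sort (Finset.univ.filter (fun i => IsDefect β i)) (· ≤ ·))[j]? with
  | some q => Function.update β q false
  | none => β


/-!
Split `V^{⊗(n+1)} = V^{⊗n} ⊗ y₁ ⊕ V^{⊗n} ⊗ y₋₁`. For `b` of weight `w` the operators act by
`E (b ⊗ y₁) = E b ⊗ y₁`, `E (b ⊗ y₋₁) = E b ⊗ y₋₁ + v ^ w • b ⊗ y₁`,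
`F (b ⊗ y₁) = v⁻¹ • F b ⊗ y₁ + b ⊗ y₋₁` and `F (b ⊗ y₋₁) = v • F b ⊗ y₋₁`,
so induction on `n` gives the commutation relation `E F - F E = [w]` on vectors of weight `w` and
the adjunction `⟨E b, c⟩ = v ^ (w + 1) ⟨b, F c⟩`. For a maximal vector `b` of weight `w` this yields
`E F b = [w] b`, so `Φ₂ b` is maximal again, and `b ⟂ F c`, so the images of `Φ₁` and `Φ₂` are
orthogonal and `⟨Φ₂ b, Φ₂ c⟩ = [w] ([w'] + v ^ (w' + 1)) ⟨b, c⟩`. Induction on the last letter then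
shows that every `Ω(α)` is maximal, that `Ω(α) ⟂ Ω(β)` whenever `α ≠ β`, and that appending `-1` to
a 1-factor `α` multiplies the norm by `v [w] [w + 1]` with `w = i_α ≥ 1`, a nonzero factor when
`[n]! ≠ 0`. Orthogonal non-isotropic vectors are linearly independent.
-/

variable {n : ℕ} {v : k} {w : ℤ} {f : Tn k n}

@[simp] lemma sgn_true : sgn true = 1 := rfl

@[simp] lemma sgn_false : sgn false = -1 := rfl

lemma form_eq_dotProduct (f g : Tn k n) : form f g = f ⬝ᵥ g := rfl

lemma qint_natCast (v : k) (m : ℕ) : qint v m = qintN v m := by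
  simp [qint]

lemma qint_neg_natCast (v : k) (m : ℕ) : qint v (-m) = -qintN v m := by
  rcases m.eq_zero_or_pos with rfl | hm
  · simp [qint, qintN]
  · simp [qint, hm.ne']

lemma qintN_succ (hv : v ≠ 0) (m : ℕ) : qintN v (m + 1) = v ^ (m : ℤ) + v⁻¹ * qintN v m := by
  rw [qintN, qintN, Finset.sum_range_succ', Finset.mul_sum, add_comm]
  congr 1
  · push_cast
    ring_nf
  · refine Finset.sum_congr rfl fun t _ => ?_
    rw [← zpow_neg_one, ← zpow_add₀ hv]
    push_cast
    ring_nf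

lemma qintN_succ' (hv : v ≠ 0) (m : ℕ) : qintN v (m + 1) = v ^ (-m : ℤ) + v * qintN v m := by
  rw [qintN, qintN, Finset.sum_range_succ, Finset.mul_sum, add_comm]
  congr 1
  · push_cast
    ring_nf
  · refine Finset.sum_congr rfl fun t _ => ?_
    rw [← zpow_one_add₀ hv]
    push_cast
    ring_nf

lemma qint_succ (hv : v ≠ 0) (m : ℤ) : qint v (m + 1) = v ^ m + v⁻¹ * qint v m := by
  obtain ⟨j, rfl | rfl⟩ := m.eq_nat_or_neg
  · rw [← Nat.cast_succ, qint_natCast, qint_natCast, qintN_succ hv]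
  · cases j with
    | zero => norm_num [qint, qintN]
    | succ j =>
      rw [show -((j + 1 : ℕ) : ℤ) + 1 = -(j : ℤ) by push_cast; ring, qint_neg_natCast,
        qint_neg_natCast, qintN_succ' hv,
        show -((j + 1 : ℕ) : ℤ) = -(j : ℤ) - 1 by push_cast; ring, zpow_sub_one₀ hv]
      field_simp
      abel

lemma qint_pred (hv : v ≠ 0) (m : ℤ) : qint v (m - 1) = v * qint v m - v ^ m := by
  have h := qint_succ hv (m - 1)
  rw [sub_add_cancel] at h
  rw [h, mul_add, mul_inv_cancel_left₀ hv, ← zpow_one_add₀ hv, add_sub_cancel,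
    add_sub_cancel_left]

lemma qfact_succ (v : k) (n : ℕ) : qfact v (n + 1) = qfact v n * qintN v (n + 1) :=
  Finset.prod_range_succ _ _

lemma qintN_ne_zero_of_qfact_ne_zero (h : qfact v n ≠ 0) {m : ℕ} (hm : 1 ≤ m)
    (hmn : m ≤ n) : qintN v m ≠ 0 := by
  obtain ⟨j, hj, rfl⟩ : ∃ j < n, m = j + 1 := ⟨m - 1, by omega, by omega⟩
  exact Finset.prod_ne_zero_iff.mp h j (Finset.mem_range.mpr hj)

def sufSum (i : Fin n → Bool) (q : Fin n) : ℤ :=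
  ∑ t ∈ Finset.univ.filter (fun t => q < t), sgn (i t)

lemma Eop_apply (v : k) (f : Tn k n) (i : Fin n → Bool) :
    Eop v n f i = ∑ j ∈ Finset.univ.filter (fun j => i j = true),
      v ^ prefSum i j * f (Function.update i j false) := rfl

lemma Fop_apply (v : k) (f : Tn k n) (i : Fin n → Bool) :
    Fop v n f i = ∑ j ∈ Finset.univ.filter (fun j => i j = false),
      v ^ (-sufSum i j) * f (Function.update i j true) := rfl

lemma wt_snoc (i : Fin n → Bool) (b : Bool) :
    wt (Fin.snoc i b : Fin (n + 1) → Bool) = wt i + sgn b := by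
  simp [wt, Fin.sum_univ_castSucc]

lemma wt_update (i : Fin n → Bool) (j : Fin n) (c : Bool) :
    wt (Function.update i j c) = wt i - sgn (i j) + sgn c := by
  rw [wt, wt, ← Finset.add_sum_erase _ _ (Finset.mem_univ j),
    ← Finset.add_sum_erase _ _ (Finset.mem_univ j), Function.update_self,
    Finset.sum_congr rfl fun t ht => by rw [Function.update_of_ne (Finset.ne_of_mem_erase ht)]]
  ring

lemma wt_le (i : Fin n → Bool) : wt i ≤ n := by
  calc wt i ≤ ∑ _t : Fin n, (1 : ℤ) :=
        Finset.sum_le_sum fun t _ => by unfold sgn; split <;> omega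
    _ = n := by simp

lemma prefSum_snoc_castSucc (i : Fin n → Bool) (b : Bool) (j : Fin n) :
    prefSum (Fin.snoc i b : Fin (n + 1) → Bool) j.castSucc = prefSum i j := by
  simp [prefSum, Finset.sum_filter, Fin.sum_univ_castSucc, (Fin.castSucc_lt_last j).asymm]

lemma prefSum_snoc_last (i : Fin n → Bool) (b : Bool) :
    prefSum (Fin.snoc i b : Fin (n + 1) → Bool) (Fin.last n) = wt i := by
  simp [prefSum, wt, Finset.sum_filter, Fin.sum_univ_castSucc, Fin.castSucc_lt_last]

lemma sufSum_snoc_castSucc (i : Fin n → Bool) (b : Bool) (j : Fin n) :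
    sufSum (Fin.snoc i b : Fin (n + 1) → Bool) j.castSucc = sufSum i j + sgn b := by
  simp [sufSum, Finset.sum_filter, Fin.sum_univ_castSucc, Fin.castSucc_lt_last]

lemma sufSum_snoc_last (i : Fin n → Bool) (b : Bool) :
    sufSum (Fin.snoc i b : Fin (n + 1) → Bool) (Fin.last n) = 0 := by
  simp [sufSum, Finset.sum_filter, Fin.sum_univ_castSucc, (Fin.castSucc_lt_last _).asymm]

lemma Eop_snoc (v : k) (f : Tn k (n + 1)) (i : Fin n → Bool) (b : Bool) :
    Eop v (n + 1) f (Fin.snoc i b) = Eop v n (fun j => f (Fin.snoc j b)) i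
      + if b then v ^ wt i * f (Fin.snoc i false) else 0 := by
  rw [Eop_apply, Eop_apply, Finset.sum_filter, Finset.sum_filter, Fin.sum_univ_castSucc]
  simp only [Fin.snoc_castSucc, Fin.snoc_last, prefSum_snoc_castSucc, prefSum_snoc_last,
    ← Fin.snoc_update, Fin.update_snoc_last]

lemma Fop_snoc (hv : v ≠ 0) (f : Tn k (n + 1)) (i : Fin n → Bool) (b : Bool) :
    Fop v (n + 1) f (Fin.snoc i b) = v ^ (-sgn b) * Fop v n (fun j => f (Fin.snoc j b)) i
      + if b then 0 else f (Fin.snoc i true) := by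
  rw [Fop_apply, Fop_apply, Finset.sum_filter, Finset.sum_filter, Fin.sum_univ_castSucc,
    Finset.mul_sum]
  simp only [Fin.snoc_castSucc, Fin.snoc_last, sufSum_snoc_castSucc, sufSum_snoc_last,
    ← Fin.snoc_update, Fin.update_snoc_last, neg_add, zpow_add₀ hv, mul_ite, mul_zero]
  congr 1
  · exact Finset.sum_congr rfl fun j _ => by split_ifs <;> ring
  · cases b <;> simp

lemma Eop_dim_zero (f : Tn k 0) : Eop v 0 f = 0 := by
  ext i
  simp [Eop_apply]

lemma Fop_dim_zero (f : Tn k 0) : Fop v 0 f = 0 := by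
  ext i
  simp [Fop_apply]

lemma Tn.ext_snoc {f g : Tn k (n + 1)} (h : ∀ i b, f (Fin.snoc i b) = g (Fin.snoc i b)) :
    f = g :=
  funext fun i => by simpa only [Fin.snoc_init_self] using h (Fin.init i) (i (Fin.last n))

@[simp]
lemma tensY_snoc (c : Bool) (f : Tn k n) (i : Fin n → Bool) (b : Bool) :
    tensY c f (Fin.snoc i b) = if b = c then f i else 0 := by
  simp only [tensY, Fin.snoc_last, Fin.snoc_castSucc]

@[simp]
lemma tensY_smul (c : Bool) (a : k) (f : Tn k n) : tensY c (a • f) = a • tensY c f :=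
  Tn.ext_snoc fun i b => by simp

@[simp]
lemma tensY_zero (c : Bool) : tensY c (0 : Tn k n) = 0 :=
  Tn.ext_snoc fun i b => by simp

lemma tensY_sub (c : Bool) (f g : Tn k n) : tensY c (f - g) = tensY c f - tensY c g :=
  Tn.ext_snoc fun i b => by simp only [Pi.sub_apply, tensY_snoc]; split_ifs <;> simp

lemma tensY_true_add_tensY_false (f : Tn k (n + 1)) :
    tensY true (fun i => f (Fin.snoc i true)) + tensY false (fun i => f (Fin.snoc i false)) = f :=
  Tn.ext_snoc fun i b => by cases b <;> simp

lemma tensY_dotProduct_tensY (a b : Bool) (f g : Tn k n) :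
    tensY a f ⬝ᵥ tensY b g = if a = b then f ⬝ᵥ g else 0 := by
  rw [dotProduct, ← (Fin.snocEquiv fun _ => Bool).sum_comp, Fintype.sum_prod_type,
    Fintype.sum_bool]
  cases a <;> cases b <;> simp [dotProduct, Fin.snocEquiv]

variable (k) in
def weightSpace (n : ℕ) (w : ℤ) : Submodule k (Tn k n) where
  carrier := {f | ∀ i, wt i ≠ w → f i = 0}
  add_mem' hf hg i hi := by simp [hf i hi, hg i hi]
  zero_mem' _ _ := rfl
  smul_mem' c _ hf i hi := by simp [hf i hi]

lemma zpow_wt_mul_of_mem_weightSpace (hf : f ∈ weightSpace k n w) (i : Fin n → Bool) :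
    v ^ wt i * f i = v ^ w * f i := by
  by_cases h : wt i = w
  · rw [h]
  · simp [hf i h]

lemma tensY_mem_weightSpace (hf : f ∈ weightSpace k n w) (c : Bool) :
    tensY c f ∈ weightSpace k (n + 1) (w + sgn c) := by
  intro i hi
  rw [← Fin.snoc_init_self i, wt_snoc] at hi
  rw [← Fin.snoc_init_self i, tensY_snoc]
  split_ifs with h
  · exact hf _ fun h' => hi (by rw [h', h])
  · rfl

lemma eq_tensY_add_tensY_of_mem_weightSpace {f : Tn k (n + 1)}
    (hf : f ∈ weightSpace k (n + 1) w) :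
    ∃ f₁ ∈ weightSpace k n (w - 1), ∃ f₀ ∈ weightSpace k n (w + 1),
      f = tensY true f₁ + tensY false f₀ := by
  have hf_comp (b : Bool) : (fun i => f (Fin.snoc i b)) ∈ weightSpace k n (w - sgn b) :=
    fun i hi => hf _ fun h => hi (by rw [← h, wt_snoc]; ring)
  exact ⟨_, hf_comp true, _, by simpa using hf_comp false, (tensY_true_add_tensY_false f).symm⟩

lemma Fop_mem_weightSpace (hf : f ∈ weightSpace k n w) :
    Fop v n f ∈ weightSpace k n (w - 2) := by
  intro i hi
  rw [Fop_apply]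
  refine Finset.sum_eq_zero fun j hj => ?_
  rw [hf _ fun h => hi ?_, mul_zero]
  rw [wt_update, (Finset.mem_filter.mp hj).2, sgn_false, sgn_true] at h
  omega

lemma Eop_tensY_true (f : Tn k n) : Eop v (n + 1) (tensY true f) = tensY true (Eop v n f) :=
  Tn.ext_snoc fun i b => by cases b <;> simp [Eop_snoc, ← Pi.zero_def]

lemma Eop_tensY_false (hf : f ∈ weightSpace k n w) :
    Eop v (n + 1) (tensY false f) = tensY false (Eop v n f) + v ^ w • tensY true f :=
  Tn.ext_snoc fun i b => by
    cases b <;> simp [Eop_snoc, ← Pi.zero_def, zpow_wt_mul_of_mem_weightSpace hf]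

lemma Fop_tensY_true (hv : v ≠ 0) (f : Tn k n) :
    Fop v (n + 1) (tensY true f) = v⁻¹ • tensY true (Fop v n f) + tensY false f :=
  Tn.ext_snoc fun i b => by cases b <;> simp [Fop_snoc hv, ← Pi.zero_def]

lemma Fop_tensY_false (hv : v ≠ 0) (f : Tn k n) :
    Fop v (n + 1) (tensY false f) = v • tensY false (Fop v n f) :=
  Tn.ext_snoc fun i b => by cases b <;> simp [Fop_snoc hv, ← Pi.zero_def]

theorem Eop_Fop_sub_Fop_Eop (hv : v ≠ 0) (hf : f ∈ weightSpace k n w) :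
    Eop v n (Fop v n f) - Fop v n (Eop v n f) = qint v w • f := by
  induction n generalizing w with
  | zero =>
    ext i
    by_cases hw : w = 0
    · simp [Eop_dim_zero, Fop_dim_zero, hw, qint, qintN]
    · simp [Eop_dim_zero, Fop_dim_zero, hf i (by simpa [wt] using Ne.symm hw)]
  | succ n ih =>
    obtain ⟨f₁, hf₁, f₀, hf₀, rfl⟩ := eq_tensY_add_tensY_of_mem_weightSpace hf
    have h₁ := congrArg (tensY true) (ih hf₁)
    have h₀ := congrArg (tensY false) (ih hf₀)
    rw [tensY_sub, tensY_smul] at h₁ h₀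
    have hF₀ : Fop v n f₀ ∈ weightSpace k n (w - 1) := by
      convert Fop_mem_weightSpace (v := v) hf₀ using 2
      ring
    have hq₁ : qint v w = v ^ (w - 1) + v⁻¹ * qint v (w - 1) := by
      rw [← qint_succ hv, sub_add_cancel]
    have hq₀ : qint v w = v * qint v (w + 1) - v ^ (w + 1) := by
      rw [← qint_pred hv, add_sub_cancel_right]
    have hpow : v * v ^ (w - 1) = v⁻¹ * v ^ (w + 1) := by
      rw [zpow_sub_one₀ hv, zpow_add_one₀ hv]
      field_simp
    simp only [map_add, map_smul, Fop_tensY_true hv, Fop_tensY_false hv, Eop_tensY_true,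
      Eop_tensY_false hf₁, Eop_tensY_false hf₀, Eop_tensY_false hF₀]
    linear_combination (norm := module) v⁻¹ • h₁ + v • h₀ - hq₁ • tensY true f₁
      - hq₀ • tensY false f₀ + hpow • tensY true (Fop v n f₀)

theorem Eop_dotProduct (hv : v ≠ 0) (hf : f ∈ weightSpace k n w) (g : Tn k n) :
    Eop v n f ⬝ᵥ g = v ^ (w + 1) * (f ⬝ᵥ Fop v n g) := by
  induction n generalizing w with
  | zero => simp [Eop_dim_zero, Fop_dim_zero]
  | succ n ih =>
    obtain ⟨f₁, hf₁, f₀, hf₀, rfl⟩ := eq_tensY_add_tensY_of_mem_weightSpace hf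
    rw [← tensY_true_add_tensY_false g]
    simp only [map_add, Eop_tensY_true, Eop_tensY_false hf₀, Fop_tensY_true hv,
      Fop_tensY_false hv, add_dotProduct, dotProduct_add, smul_dotProduct, dotProduct_smul,
      tensY_dotProduct_tensY, Bool.false_eq_true, Bool.true_eq_false, if_true, if_false,
      smul_eq_mul, mul_zero, add_zero, zero_add]
    rw [ih hf₁, ih hf₀, sub_add_cancel, zpow_add_one₀ hv (w + 1), zpow_add_one₀ hv w]
    field_simp

lemma Eop_Fop_of_Eop_eq_zero (hv : v ≠ 0) (hf : f ∈ weightSpace k n w) (hE : Eop v n f = 0) :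
    Eop v n (Fop v n f) = qint v w • f := by
  simpa [hE] using Eop_Fop_sub_Fop_Eop hv hf

lemma dotProduct_Fop_of_Eop_eq_zero (hv : v ≠ 0) (hf : f ∈ weightSpace k n w)
    (hE : Eop v n f = 0) (g : Tn k n) : f ⬝ᵥ Fop v n g = 0 := by
  have h := Eop_dotProduct hv hf g
  rw [hE, zero_dotProduct, eq_comm] at h
  exact (mul_eq_zero.mp h).resolve_left (zpow_ne_zero _ hv)

lemma Fop_dotProduct_Fop_of_Eop_eq_zero (hv : v ≠ 0) (hf : f ∈ weightSpace k n w)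
    (hE : Eop v n f = 0) (g : Tn k n) :
    v ^ (w - 1) * (Fop v n f ⬝ᵥ Fop v n g) = qint v w * (f ⬝ᵥ g) := by
  rw [← smul_eq_mul (qint v w), ← smul_dotProduct, ← Eop_Fop_of_Eop_eq_zero hv hf hE,
    Eop_dotProduct hv (Fop_mem_weightSpace hf)]
  ring_nf

lemma Phi1_dotProduct_Phi1 (f g : Tn k n) : Phi1 f ⬝ᵥ Phi1 g = f ⬝ᵥ g := by
  simp [Phi1, tensY_dotProduct_tensY]

lemma Phi1_dotProduct_Phi2 (hv : v ≠ 0) (hf : f ∈ weightSpace k n w) (hE : Eop v n f = 0)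
    (w' : ℤ) (g : Tn k n) : Phi1 f ⬝ᵥ Phi2 v w' g = 0 := by
  simp [Phi1, Phi2, tensY_dotProduct_tensY, dotProduct_Fop_of_Eop_eq_zero hv hf hE]

lemma Phi2_dotProduct_Phi2 (hv : v ≠ 0) (hf : f ∈ weightSpace k n w) (hE : Eop v n f = 0)
    (w' : ℤ) (g : Tn k n) :
    Phi2 v w f ⬝ᵥ Phi2 v w' g = qint v w * (qint v w' + v ^ (w' + 1)) * (f ⬝ᵥ g) := by
  have hFF := Fop_dotProduct_Fop_of_Eop_eq_zero hv hf hE g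
  simp only [Phi2, sub_dotProduct, dotProduct_sub, smul_dotProduct, dotProduct_smul,
    tensY_dotProduct_tensY, smul_eq_mul, Bool.true_eq_false, Bool.false_eq_true, ↓reduceIte,
    mul_zero, sub_zero, zero_sub, mul_neg, sub_neg_eq_add]
  rw [show v ^ w = v * v ^ (w - 1) by rw [← zpow_one_add₀ hv]; ring_nf, zpow_add_one₀ hv]
  linear_combination (v ^ w' * v) * hFF

lemma Omega_snoc (v : k) (α : Fin n → Bool) (b : Bool) :
    Omega v (n + 1) (Fin.snoc α b) =
      if b then Phi1 (Omega v n α) else Phi2 v (wt α) (Omega v n α) := by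
  simp [Omega]

lemma Omega_mem_weightSpace (v : k) (α : Fin n → Bool) :
    Omega v n α ∈ weightSpace k n (wt α) := by
  induction α using Fin.snocInduction with
  | elim0 => exact fun i hi => absurd (by simp [wt]) hi
  | snoc α b ih =>
    rw [Omega_snoc, wt_snoc]
    cases b
    · refine Submodule.sub_mem _ (Submodule.smul_mem _ _ (tensY_mem_weightSpace ih false))
        (Submodule.smul_mem _ _ ?_)
      convert tensY_mem_weightSpace (Fop_mem_weightSpace (v := v) ih) true using 2
      rw [sgn_false, sgn_true]
      ring
    · exact tensY_mem_weightSpace ih true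

theorem Eop_Omega (hv : v ≠ 0) (α : Fin n → Bool) : Eop v n (Omega v n α) = 0 := by
  induction α using Fin.snocInduction with
  | elim0 => exact Eop_dim_zero _
  | snoc α b ih =>
    have hα := Omega_mem_weightSpace v α
    rw [Omega_snoc]
    cases b
    · simp [Phi2, Eop_tensY_false hα, Eop_tensY_true, ih, Eop_Fop_of_Eop_eq_zero hv hα ih,
        smul_smul, mul_comm]
    · simp [Phi1, Eop_tensY_true, ih]

theorem Omega_dotProduct_Omega_of_ne (hv : v ≠ 0) {α β : Fin n → Bool} (h : α ≠ β) :
    Omega v n α ⬝ᵥ Omega v n β = 0 := by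
  induction n with
  | zero => exact absurd (Subsingleton.elim α β) h
  | succ n ih =>
    cases α using Fin.snocCases with | snoc α a =>
    cases β using Fin.snocCases with | snoc β b =>
    have hα := Omega_mem_weightSpace v α
    have hβ := Omega_mem_weightSpace v β
    rw [Omega_snoc, Omega_snoc]
    cases a <;> cases b <;> simp only [Bool.false_eq_true, ↓reduceIte]
    · rw [Phi2_dotProduct_Phi2 hv hα (Eop_Omega hv α), ih (by rintro rfl; exact h rfl), mul_zero]
    · rw [dotProduct_comm]
      exact Phi1_dotProduct_Phi2 hv hβ (Eop_Omega hv β) _ _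
    · exact Phi1_dotProduct_Phi2 hv hα (Eop_Omega hv α) _ _
    · rw [Phi1_dotProduct_Phi1, ih (by rintro rfl; exact h rfl)]

lemma IsOneFactor.of_snoc {α : Fin n → Bool} {b : Bool}
    (h : IsOneFactor (Fin.snoc α b : Fin (n + 1) → Bool)) : IsOneFactor α := by
  intro j
  simpa [Finset.sum_filter, Fin.sum_univ_castSucc, (Fin.castSucc_lt_last j).not_ge] using
    h j.castSucc

lemma IsOneFactor.one_le_wt_of_snoc_false {α : Fin n → Bool}
    (h : IsOneFactor (Fin.snoc α false : Fin (n + 1) → Bool)) : 1 ≤ wt α := by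
  have h₀ := h (Fin.last n)
  rw [Finset.filter_true_of_mem fun t _ => Fin.le_last t] at h₀
  change 0 ≤ wt (Fin.snoc α false : Fin (n + 1) → Bool) at h₀
  rw [wt_snoc, sgn_false] at h₀
  omega

theorem Omega_dotProduct_self_ne_zero (hv : v ≠ 0) (hq : qfact v n ≠ 0) {α : Fin n → Bool}
    (hα : IsOneFactor α) : Omega v n α ⬝ᵥ Omega v n α ≠ 0 := by
  induction n with
  | zero => simp [Omega, dotProduct]
  | succ n ih =>
    cases α using Fin.snocCases with | snoc α b =>
    have ih' := ih (left_ne_zero_of_mul (qfact_succ v n ▸ hq)) hα.of_snoc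
    rw [Omega_snoc]
    cases b
    · have hw₁ := hα.one_le_wt_of_snoc_false
      have hwn := wt_le α
      obtain ⟨m, hm⟩ := Int.eq_ofNat_of_zero_le (by omega : 0 ≤ wt α)
      have hsucc : qint v (wt α) + v ^ (wt α + 1) = v * qint v (wt α + 1) := by
        rw [qint_succ hv, mul_add, mul_inv_cancel_left₀ hv, zpow_add_one₀ hv]
        ring
      rw [if_neg Bool.false_ne_true, Phi2_dotProduct_Phi2 hv (Omega_mem_weightSpace v α)
        (Eop_Omega hv α), hsucc, hm, ← Nat.cast_succ, qint_natCast, qint_natCast]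
      exact mul_ne_zero (mul_ne_zero (qintN_ne_zero_of_qfact_ne_zero hq (by omega) (by omega))
        (mul_ne_zero hv (qintN_ne_zero_of_qfact_ne_zero hq (by omega) (by omega)))) ih'
    · rwa [if_pos rfl, Phi1_dotProduct_Phi1]

/-- the vectors `Ω(α)` are maximal; if `[n]! ≠ 0` they are
non-isotropic, pairwise orthogonal, and linearly independent. -/
theorem stmt_12 {k : Type*} [Field k] (v : k) (hv : v ≠ 0) (n : ℕ) :
    (∀ α : Fin n → Bool, IsOneFactor α → Eop v n (Omega v n α) = 0) ∧
    (qfact v n ≠ 0 →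
      (∀ α : Fin n → Bool, IsOneFactor α → form (Omega v n α) (Omega v n α) ≠ 0) ∧
      (∀ α β : Fin n → Bool, IsOneFactor α → IsOneFactor β → α ≠ β →
        form (Omega v n α) (Omega v n β) = 0) ∧
      LinearIndependent k
        (fun α : {α : Fin n → Bool // IsOneFactor α} => Omega v n α.1)) := by
  simp only [form_eq_dotProduct]
  refine ⟨fun α _ => Eop_Omega hv α, fun hq => ⟨?_, ?_, ?_⟩⟩
  · exact fun α hα => Omega_dotProduct_self_ne_zero hv hq hα
  · exact fun α β _ _ h => Omega_dotProduct_Omega_of_ne hv h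
  · exact LinearMap.BilinForm.linearIndependent_of_iIsOrtho (B := dotProductBilin k k)
      (fun α β h => Omega_dotProduct_Omega_of_ne hv (Subtype.coe_injective.ne h))
      (fun α => Omega_dotProduct_self_ne_zero hv hq α.2)
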